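/- arXiv:1612.00190 — 4 statements merged into one kernel-verified Lean document; each statement's English description precedes it below -/
import Mathlib

section
/- In a k-integral splittable singleton congestion game with player-specific affine cost functions, a strategy profile x is a pure Nash equilibrium if and only if for every player i and resources e, f with x_{i,e} > 0, the marginal decrease μ^{-k}_{i,e}(x) = k·a_{i,e}(x_e + x_{i,e} - k) is at most the marginal increase μ^{+k}_{i,f}(x) = k·a_{i,f}(x_f + x_{i,f} + k). -/
open Finset

/-- In a `k`-integral splittable singleton congestion game with affine
player-specific cost functions, `x` is an equilibrium (no single-packet move of size `k`
decreases a player's cost) iff for every player `i` and resources `e`, `f` with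
`x i e > 0`, the marginal decrease on `e` is at most the marginal increase on `f`. -/
theorem stmt1 {N E : Type*} [Fintype N] [Fintype E] [DecidableEq E]
    (d : N → ℝ) (k : ℝ) (hk : 0 < k)
    (a b : N → E → ℝ) (ha : ∀ i e, 0 < a i e) (hb : ∀ i e, 0 ≤ b i e)
    (x : N → E → ℝ)
    (hint : ∀ i e, ∃ q : ℕ, x i e = q * k)
    (hdem : ∀ i, ∑ e, x i e = d i) :
    (∀ i : N, ∀ e f : E, e ≠ f → k ≤ x i e →
        (∑ g, (a i g * (∑ j, x j g) + b i g) * x i g) ≤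
          ∑ g, (a i g *
              ((∑ j, x j g) + (if g = e then -k else if g = f then k else 0)) + b i g) *
            (x i g + (if g = e then -k else if g = f then k else 0)))
    ↔ (∀ i : N, ∀ e f : E, 0 < x i e →
        k * (a i e * ((∑ j, x j e) + x i e - k) + b i e) ≤
          k * (a i f * ((∑ j, x j f) + x i f + k) + b i f)) := by
  have key : ∀ (i : N) (e f : E), e ≠ f →
      (∑ g, (a i g *
            ((∑ j, x j g) + (if g = e then -k else if g = f then k else 0)) + b i g) *
          (x i g + (if g = e then -k else if g = f then k else 0)))
      - (∑ g, (a i g * (∑ j, x j g) + b i g) * x i g)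
      = k * (a i f * ((∑ j, x j f) + x i f + k) + b i f)
        - k * (a i e * ((∑ j, x j e) + x i e - k) + b i e) := by
    intro i e f hef
    rw [← Finset.sum_sub_distrib]
    have hsub : (∑ g, ((a i g *
            ((∑ j, x j g) + (if g = e then -k else if g = f then k else 0)) + b i g) *
          (x i g + (if g = e then -k else if g = f then k else 0))
          - (a i g * (∑ j, x j g) + b i g) * x i g))
        = ∑ g ∈ ({e, f} : Finset E), ((a i g *
            ((∑ j, x j g) + (if g = e then -k else if g = f then k else 0)) + b i g) *
          (x i g + (if g = e then -k else if g = f then k else 0))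
          - (a i g * (∑ j, x j g) + b i g) * x i g) := by
      refine (Finset.sum_subset (Finset.subset_univ _) ?_).symm
      intro g _ hg
      simp only [Finset.mem_insert, Finset.mem_singleton, not_or] at hg
      rw [if_neg hg.1, if_neg hg.2]
      ring
    rw [hsub, Finset.sum_pair hef]
    simp only [if_pos rfl, if_neg hef.symm, ite_true]
    ring
  constructor
  · intro h i e f hx
    obtain ⟨q, hq⟩ := hint i e
    have hq1 : 1 ≤ (q : ℝ) := by
      have hq0 : q ≠ 0 := by
        rintro rfl
        simp at hq
        exact absurd hq hx.ne'
      exact_mod_cast Nat.one_le_iff_ne_zero.mpr hq0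
    have hkx : k ≤ x i e := by rw [hq]; nlinarith
    by_cases hef : e = f
    · subst hef
      nlinarith [mul_pos (mul_pos hk (ha i e)) hk]
    · have h1 := h i e f hef hkx
      have h2 := key i e f hef
      linarith
  · intro h i e f hef hkx
    have hx : 0 < x i e := lt_of_lt_of_le hk hkx
    have h1 := h i e f hx
    have h2 := key i e f hef
    linarith
end

section
/- Let x be the atomic splittable equilibrium of a singleton congestion game with affine costs, and suppose every positive component x_{i,e} of x is ≥ k* for some k* > 0. Let x_{k_0} be an equilibrium of the k_0-integral game where k_0 ≤ k*/(2m²). Then for every player i and resource e: x_{i,e} = 0 if and only if (x_{k_0})_{i,e} < m²·k_0, provided |(x_{k_0})_{i,e} − x_{i,e}| < m²·k_0 for all i, e. -/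
/-- Support identification: if every positive component of the atomic
splittable equilibrium `x` is at least `k* > 0`, `k0 ≤ k*/(2m²)`, and
`|x_{k0,i,e} − x_{i,e}| < m²·k0` for all `i,e`, then `x i e = 0` iff
`x_{k0} i e < m²·k0`. -/
theorem stmt6 {N E : Type*} [Fintype E]
    (m : ℕ) (hm : m = Fintype.card E)
    (kstar k0 : ℝ) (hks : 0 < kstar) (hk0 : 0 < k0)
    (hk0le : k0 ≤ kstar / (2 * (m : ℝ) ^ 2))
    (x xk0 : N → E → ℝ)
    (hxpos : ∀ i e, 0 ≤ x i e)
    (hbig : ∀ i e, 0 < x i e → kstar ≤ x i e)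
    (hsens : ∀ i e, |xk0 i e - x i e| < (m : ℝ) ^ 2 * k0) :
    ∀ i e, x i e = 0 ↔ xk0 i e < (m : ℝ) ^ 2 * k0 := by
  intro i e
  have hmpos : (0 : ℝ) < (m : ℝ) ^ 2 := by
    have : 0 < m := by
      rw [hm]
      exact Fintype.card_pos_iff.mpr ⟨e⟩
    positivity
  have habs := abs_lt.mp (hsens i e)
  constructor
  · intro h0
    rw [h0] at habs
    simpa using habs.2
  · intro hlt
    by_contra hne
    have hpos : 0 < x i e := lt_of_le_of_ne (hxpos i e) (Ne.symm hne)
    have hks' : 2 * (m : ℝ) ^ 2 * k0 ≤ kstar := by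
      have := (le_div_iff₀ (show (0:ℝ) < 2 * (m:ℝ)^2 by positivity)).mp hk0le
      linarith
    have := hbig i e hpos
    linarith [habs.1]
end

section
/- Multimarket Cournot oligopolies with firm-specific affine price functions and quadratic production costs admit an isomorphic atomic splittable singleton congestion game: there exist bijections φ_i between strategy spaces (with production quantities bounded by d_i := Σ_{e∈E_i} max{t : p_{i,e}(t)=0}) and constants A_i ∈ ℝ such that u_i(x) = v_i(φ_1(x_1),…,φ_n(x_n)) + A_i for all profiles x, where v_i = −π_i is the negated congestion cost. -/
open Finset

/-- Strategy space of firm `i` in the multimarket Cournot oligopoly (production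
quantities on accessible markets, total production bounded by `d i`). -/
abbrev XStrat {N E : Type*} [Fintype E] (Ei : N → Finset E) (d : N → ℝ) (i : N) :=
  {x : E → ℝ // (∀ e, 0 ≤ x e) ∧ (∀ e, e ∉ Ei i → x e = 0) ∧ ∑ e ∈ Ei i, x e ≤ d i}

/-- Strategy space of player `i` in the associated atomic splittable singleton
congestion game: resources are the markets plus one private resource per firm. -/
abbrev YStrat {N E : Type*} [Fintype N] [Fintype E]
    (Ei : N → Finset E) (d : N → ℝ) (i : N) :=
  {y : E ⊕ N → ℝ // (∀ res, 0 ≤ y res) ∧ (∀ e, e ∉ Ei i → y (Sum.inl e) = 0) ∧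
    (∀ j, j ≠ i → y (Sum.inr j) = 0) ∧ ∑ res, y res = d i}

section Aux

variable {N E : Type*} [Fintype N] [Fintype E] [DecidableEq N]

/-- The natural bijection: append the slack on the private resource. -/
noncomputable def myPhi (Ei : N → Finset E) (d : N → ℝ) (i : N) :
    XStrat Ei d i ≃ YStrat Ei d i where
  toFun x := ⟨Sum.elim x.1 (fun j => if j = i then d i - ∑ e ∈ Ei i, x.1 e else 0), by
    obtain ⟨x, hx0, hxz, hxd⟩ := x
    refine ⟨?_, fun e he => hxz e he, fun j hj => by simp [hj], ?_⟩
    · rintro (e | j)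
      · exact hx0 e
      · by_cases hj : j = i <;> simp [hj] <;> linarith
    · rw [Fintype.sum_sum_type]
      simp only [Sum.elim_inl, Sum.elim_inr]
      rw [Finset.sum_ite_eq' Finset.univ i, if_pos (Finset.mem_univ i),
        ← Finset.sum_subset (Finset.subset_univ (Ei i)) (fun e _ he => hxz e he)]
      ring⟩
  invFun y := ⟨fun e => y.1 (Sum.inl e), by
    obtain ⟨y, hy0, hyz, hyr, hyd⟩ := y
    refine ⟨fun e => hy0 _, fun e he => hyz e he, ?_⟩
    calc ∑ e ∈ Ei i, y (Sum.inl e) ≤ ∑ res, y res := by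
          rw [Fintype.sum_sum_type]
          have h1 : ∑ e ∈ Ei i, y (Sum.inl e) ≤ ∑ e, y (Sum.inl e) :=
            Finset.sum_le_sum_of_subset_of_nonneg (Finset.subset_univ _)
              (fun e _ _ => hy0 _)
          have h2 : (0:ℝ) ≤ ∑ j, y (Sum.inr j) :=
            Finset.sum_nonneg fun j _ => hy0 _
          linarith
      _ = d i := hyd⟩
  left_inv x := by
    apply Subtype.ext; funext e; rfl
  right_inv y := by
    obtain ⟨y, hy0, hyz, hyr, hyd⟩ := y
    apply Subtype.ext; funext res
    rcases res with e | j
    · rfl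
    · simp only [Sum.elim_inr]
      by_cases hj : j = i
      · subst hj
        rw [if_pos rfl]
        have : (∑ res, y res) = (∑ e, y (Sum.inl e)) + ∑ k, y (Sum.inr k) :=
          Fintype.sum_sum_type y
        rw [hyd] at this
        have h1 : (∑ e, y (Sum.inl e)) = ∑ e ∈ Ei j, y (Sum.inl e) :=
          (Finset.sum_subset (Finset.subset_univ _) (fun e _ he => hyz e he)).symm
        have h2 : (∑ k, y (Sum.inr k)) = y (Sum.inr j) := by
          rw [← Finset.sum_subset (Finset.subset_univ {j})
            (fun k _ hk => hyr k (by simpa using hk)), Finset.sum_singleton]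
        rw [h1, h2] at this
        linarith
      · simp [hj, hyr j hj]

theorem myPhi_inl (Ei : N → Finset E) (d : N → ℝ) (i : N) (x : XStrat Ei d i) (e : E) :
    ((myPhi Ei d i) x).1 (Sum.inl e) = x.1 e := rfl

theorem myPhi_inr (Ei : N → Finset E) (d : N → ℝ) (i j : N) (x : XStrat Ei d i) :
    ((myPhi Ei d i) x).1 (Sum.inr j) =
      if j = i then d i - ∑ e ∈ Ei i, x.1 e else 0 := rfl

end Aux

/-- every multimarket Cournot oligopoly with firm-specific affine price
functions `p_{i,e}(t) = s_{i,e} − r_{i,e} t` and quadratic costs `c_i t²` has an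
isomorphic atomic splittable singleton congestion game: there are strategy bijections
`φ_i` and constants `A_i` such that the Cournot utility equals the negated congestion
cost of the mapped profile plus `A_i`. The congestion game has cost `r_{i,e} t − s_{i,e}`
on market `e ∈ E_i` and cost `c_i (t − 2 d_i)` on firm `i`'s private resource. -/
theorem stmt11 {N E : Type*} [Fintype N] [Fintype E]
    (Ei : N → Finset E) (s r : N → E → ℝ)
    (hr : ∀ i e, 0 < r i e) (hs : ∀ i e, 0 ≤ s i e)
    (c : N → ℝ) (hc : ∀ i, 0 ≤ c i)
    (d : N → ℝ) (hd : ∀ i, d i = ∑ e ∈ Ei i, s i e / r i e) :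
    ∃ (φ : ∀ i : N, XStrat Ei d i ≃ YStrat Ei d i) (A : N → ℝ),
      ∀ (x : ∀ i, XStrat Ei d i) (i : N),
        ((∑ e ∈ Ei i, (s i e - r i e * (∑ j, (x j).1 e)) * (x i).1 e)
            - c i * (∑ e ∈ Ei i, (x i).1 e) ^ 2)
        = -((∑ e ∈ Ei i,
              (r i e * (∑ j, ((φ j) (x j)).1 (Sum.inl e)) - s i e) *
                ((φ i) (x i)).1 (Sum.inl e))
            + c i * ((∑ j, ((φ j) (x j)).1 (Sum.inr i)) - 2 * d i) *
                ((φ i) (x i)).1 (Sum.inr i))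
          + A i := by
  classical
  refine ⟨fun i => myPhi Ei d i, fun i => -(c i * d i ^ 2), fun x i => ?_⟩
  have hinr : (∑ j, ((myPhi Ei d j) (x j)).1 (Sum.inr i)) =
      d i - ∑ e ∈ Ei i, (x i).1 e := by
    have h0 : ∀ j, ((myPhi Ei d j) (x j)).1 (Sum.inr i) =
        if i = j then d j - ∑ e ∈ Ei j, (x j).1 e else 0 :=
      fun j => myPhi_inr Ei d j i (x j)
    simp only [h0]
    rw [Finset.sum_ite_eq Finset.univ i (fun j => d j - ∑ e ∈ Ei j, (x j).1 e),
      if_pos (Finset.mem_univ i)]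
  simp only [myPhi_inl]
  rw [hinr, myPhi_inr, if_pos rfl]
  have hsum : (∑ e ∈ Ei i, (r i e * (∑ j, (x j).1 e) - s i e) * (x i).1 e)
      = -(∑ e ∈ Ei i, (s i e - r i e * (∑ j, (x j).1 e)) * (x i).1 e) := by
    rw [← Finset.sum_neg_distrib]
    exact Finset.sum_congr rfl fun e _ => by ring
  rw [hsum]; ring
end

section
/- In the Add subroutine, let x_k be a k-integral equilibrium for demands (d_i), and let x_q be the strategy profile after q restricted best responses following the insertion of one extra packet of size k for one player (where after each step exactly one resource's total load exceeds its equilibrium load by k and all other total loads are unchanged). Then the player-specific loads satisfy |(x_q)_{i,e} − (x_k)_{i,e}| < 2m·k for all players i and resources e. -/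
open Finset

/-- Discrete marginal increase for affine costs. -/
noncomputable def mup {N E : Type*} [Fintype N] (a b : N → E → ℝ) (k : ℝ)
    (z : N → E → ℝ) (i : N) (e : E) : ℝ :=
  k * (a i e * ((∑ j, z j e) + z i e + k) + b i e)

/-- Discrete marginal decrease for affine costs. -/
noncomputable def mum {N E : Type*} [Fintype N] (a b : N → E → ℝ) (k : ℝ)
    (z : N → E → ℝ) (i : N) (e : E) : ℝ :=
  k * (a i e * ((∑ j, z j e) + z i e - k) + b i e)

/-- A restricted best response: some player moves one packet of size `k` from a
resource maximizing her marginal decrease to a resource minimizing her marginal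
increase, strictly decreasing her cost. -/
def RBRStep {N E : Type*} [Fintype N] [DecidableEq N] [DecidableEq E]
    (a b : N → E → ℝ) (k : ℝ) (z z' : N → E → ℝ) : Prop :=
  ∃ (i : N) (em ep : E), em ≠ ep ∧ k ≤ z i em ∧
    (∀ f, mum a b k z i f ≤ mum a b k z i em) ∧
    (∀ f, mup a b k z i ep ≤ mup a b k z i f) ∧
    mup a b k z i ep < mum a b k z i em ∧
    z' = fun j f => if j = i then
        (if f = em then z i em - k else if f = ep then z i ep + k else z i f)
      else z j f

/-- The inductive invariant of the `Add` subroutine: nonnegativity, per-player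
totals, a unique excess resource, and a quasi-equilibrium condition stated with
respect to the equilibrium loads. -/
def AddInv {N E : Type*} [Fintype N] [Fintype E] [DecidableEq N] [DecidableEq E]
    (a b : N → E → ℝ) (k : ℝ) (i0 : N) (xk z : N → E → ℝ) : Prop :=
  (∀ i e, 0 ≤ z i e) ∧
  (∀ i, ∑ e, z i e = (∑ e, xk i e) + (if i = i0 then k else 0)) ∧
  (∃ es, ∀ e, (∑ j, z j e) = (∑ j, xk j e) + (if e = es then k else 0)) ∧
  (∀ i e f, k ≤ z i e →
    a i e * ((∑ j, xk j e) + z i e - k) + b i e ≤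
      a i f * ((∑ j, xk j f) + z i f + k) + b i f)

lemma addInv_base {N E : Type*} [Fintype N] [Fintype E] [DecidableEq N] [DecidableEq E]
    (a b : N → E → ℝ) (ha : ∀ i e, 0 < a i e)
    (k : ℝ) (hk : 0 < k)
    (xk : N → E → ℝ) (hxnn : ∀ i e, 0 ≤ xk i e)
    (hkeq : ∀ i e f, 0 < xk i e → mum a b k xk i e ≤ mup a b k xk i f)
    (i0 : N) (f0 : E) (hf0 : ∀ f, mup a b k xk i0 f0 ≤ mup a b k xk i0 f)
    (x0 : N → E → ℝ)
    (hx0 : x0 = fun j f => if j = i0 ∧ f = f0 then xk j f + k else xk j f) :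
    AddInv a b k i0 xk x0 := by
  have hv : ∀ j f, x0 j f = xk j f + (if j = i0 ∧ f = f0 then k else 0) := by
    intro j f; simp only [hx0]; split_ifs <;> ring
  have hkeq' : ∀ j e f, 0 < xk j e →
      a j e * ((∑ j', xk j' e) + xk j e - k) + b j e ≤
        a j f * ((∑ j', xk j' f) + xk j f + k) + b j f := by
    intro j e f hpos
    have h := hkeq j e f hpos
    rw [mum, mup] at h
    exact le_of_mul_le_mul_left h hk
  have hf0' : ∀ f, a i0 f0 * ((∑ j', xk j' f0) + xk i0 f0 + k) + b i0 f0 ≤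
      a i0 f * ((∑ j', xk j' f) + xk i0 f + k) + b i0 f := by
    intro f
    have h := hf0 f
    rw [mup, mup] at h
    exact le_of_mul_le_mul_left h hk
  refine ⟨?_, ?_, ⟨f0, ?_⟩, ?_⟩
  · intro i e; rw [hv]
    have := hxnn i e
    split_ifs <;> linarith
  · intro i
    have h1 : ∑ e, x0 i e = (∑ e, xk i e) + ∑ e, (if i = i0 ∧ e = f0 then k else 0) := by
      rw [← Finset.sum_add_distrib]
      exact Finset.sum_congr rfl fun e _ => hv i e
    rw [h1]
    congr 1
    by_cases hi : i = i0
    · simp [hi]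
    · simp [hi]
  · intro e
    have h1 : ∑ j, x0 j e = (∑ j, xk j e) + ∑ j, (if j = i0 ∧ e = f0 then k else 0) := by
      rw [← Finset.sum_add_distrib]
      exact Finset.sum_congr rfl fun j _ => hv j e
    rw [h1]
    congr 1
    by_cases he : e = f0
    · simp [he]
    · simp [he]
  · intro j e f hke
    rw [hv] at hke
    rw [hv, hv]
    by_cases hc : j = i0 ∧ e = f0
    · have c1 : (if j = i0 ∧ e = f0 then k else 0) = k := if_pos hc
      rw [c1] at hke ⊢
      obtain ⟨hj, he⟩ := hc
      have h1 := hf0' f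
      rw [← hj, ← he] at h1
      have h2 : 0 ≤ a j f * (if j = i0 ∧ f = f0 then k else 0) := by
        have := (ha j f).le
        split_ifs <;> nlinarith
      have h3 : 0 < a j e * k := mul_pos (ha j e) hk
      nlinarith
    · rw [if_neg hc, add_zero] at hke ⊢
      have hpos : 0 < xk j e := lt_of_lt_of_le hk hke
      have h1 := hkeq' j e f hpos
      have h2 : 0 ≤ a j f * (if j = i0 ∧ f = f0 then k else 0) := by
        have := (ha j f).le
        split_ifs <;> nlinarith
      nlinarith

lemma addInv_step {N E : Type*} [Fintype N] [Fintype E] [DecidableEq N] [DecidableEq E]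
    (a b : N → E → ℝ) (ha : ∀ i e, 0 < a i e)
    (k : ℝ) (hk : 0 < k) (i0 : N) (xk z z' : N → E → ℝ)
    (hinv : AddInv a b k i0 xk z) (hstep : RBRStep a b k z z') :
    AddInv a b k i0 xk z' := by
  obtain ⟨hN, hT, ⟨es, hE⟩, hQ⟩ := hinv
  obtain ⟨i, em, ep, hne, hkem, hmax, hmin, hlt, hz'⟩ := hstep
  -- the source resource must be the excess resource
  have hem : em = es := by
    by_contra hces
    have e1 := hQ i em ep hkem
    have h2 : mum a b k z i em ≤ mup a b k z i ep := by
      have hEem : (∑ j, z j em) = ∑ j, xk j em := by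
        rw [hE em, if_neg hces, add_zero]
      have hEep : (∑ j, z j ep) = (∑ j, xk j ep) + (if ep = es then k else 0) := hE ep
      rw [mum, mup, hEem, hEep]
      have hip : (0:ℝ) ≤ (if ep = es then k else 0) := by
        split_ifs
        · exact hk.le
        · exact le_refl 0
      refine mul_le_mul_of_nonneg_left ?_ hk.le
      nlinarith [mul_nonneg (ha i ep).le hip]
    exact absurd hlt (not_lt.mpr h2)
  -- rewrite the excess description in terms of em
  rw [← hem] at hE
  clear hem
  -- per-resource equilibrium loads of z
  have hEem : (∑ j, z j em) = (∑ j, xk j em) + k := by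
    rw [hE em]; simp
  have hEne : ∀ f, f ≠ em → (∑ j, z j f) = ∑ j, xk j f := by
    intro f hf; rw [hE f, if_neg hf, add_zero]
  have hEep : (∑ j, z j ep) = ∑ j, xk j ep := hEne ep (Ne.symm hne)
  -- the displacement function
  set d : E → ℝ := fun f => (if f = ep then k else 0) - (if f = em then k else 0) with hd
  have dm : d em = -k := by simp [hd, hne]
  have dp : d ep = k := by simp [hd, Ne.symm hne]
  have d0 : ∀ g, g ≠ em → g ≠ ep → d g = 0 := by
    intro g h1 h2; simp [hd, h1, h2]
  -- pointwise description of z'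
  have hvi : ∀ f, z' i f = z i f + d f := by
    intro f
    simp only [hz', if_pos (rfl : i = i)]
    by_cases h1 : f = em
    · rw [if_pos h1, h1, dm]; ring
    · rw [if_neg h1]
      by_cases h2 : f = ep
      · rw [if_pos h2, h2, dp]
      · rw [if_neg h2, d0 f h1 h2, add_zero]
  have hvo : ∀ j f, j ≠ i → z' j f = z j f := by
    intro j f hj
    simp only [hz', if_neg hj]
  -- divided versions of the step conditions
  have hdiv : ∀ X Y : ℝ, k * X ≤ k * Y → X ≤ Y := fun X Y h => le_of_mul_le_mul_left h hk
  have kmax : ∀ f, a i f * ((∑ j, xk j f) + z i f - k) + b i f ≤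
      a i em * ((∑ j, xk j em) + z i em) + b i em := by
    intro f
    have h := hmax f
    rw [mum, mum, hE f, hEem] at h
    have h' := hdiv _ _ h
    have h0 : (0:ℝ) ≤ a i f * (if f = em then k else 0) := by
      have := (ha i f).le
      split_ifs <;> nlinarith
    nlinarith [h', h0]
  have kmin : ∀ f, f ≠ em → a i ep * ((∑ j, xk j ep) + z i ep + k) + b i ep ≤
      a i f * ((∑ j, xk j f) + z i f + k) + b i f := by
    intro f hf
    have h := hmin f
    rw [mup, mup, hEne f hf, hEep] at h
    exact hdiv _ _ h
  have klt : a i ep * ((∑ j, xk j ep) + z i ep + k) + b i ep <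
      a i em * ((∑ j, xk j em) + z i em) + b i em := by
    have h := hlt
    rw [mum, mup, hEem, hEep] at h
    have h' := lt_of_mul_lt_mul_left h hk.le
    nlinarith [h']
  refine ⟨?_, ?_, ⟨ep, ?_⟩, ?_⟩
  · -- nonnegativity
    intro j f
    by_cases hj : j = i
    · rw [hj, hvi f]
      by_cases h1 : f = em
      · rw [h1, dm]
        linarith [hkem]
      · by_cases h2 : f = ep
        · rw [h2, dp]; linarith [hN i ep, hk.le]
        · rw [d0 f h1 h2, add_zero]; exact hN i f
    · rw [hvo j f hj]; exact hN j f
  · -- per-player totals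
    intro j
    by_cases hj : j = i
    · have h1 : ∑ e, z' j e = (∑ e, z j e) + ∑ e, d e := by
        rw [← Finset.sum_add_distrib]
        refine Finset.sum_congr rfl fun e _ => ?_
        rw [hj, hvi e]
      have h2 : (∑ e, d e) = 0 := by
        simp only [hd]
        rw [Finset.sum_sub_distrib]
        simp [Finset.sum_ite_eq']
      rw [h1, h2, add_zero]
      exact hT j
    · have h1 : ∑ e, z' j e = ∑ e, z j e :=
        Finset.sum_congr rfl fun e _ => hvo j e hj
      rw [h1]
      exact hT j
  · -- unique excess resource, now at ep
    intro e
    have h0 : ∀ j, z' j e = z j e + (if j = i then d e else 0) := by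
      intro j
      by_cases hj : j = i
      · rw [hj, hvi e, if_pos (rfl : i = i)]
      · rw [hvo j e hj, if_neg hj, add_zero]
    have h1 : ∑ j, z' j e = (∑ j, z j e) + d e := by
      rw [Finset.sum_congr rfl fun j _ => h0 j, Finset.sum_add_distrib]
      congr 1
      simp [Finset.sum_ite_eq']
    rw [h1, hE e]
    simp only [hd]
    split_ifs <;> ring
  · -- quasi-equilibrium
    intro j e f hke'
    by_cases hj : j = i
    · rw [hj] at hke' ⊢
      rw [hvi e] at hke'
      rw [hvi e, hvi f]
      by_cases he1 : e = em
      · rw [he1, dm]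
        by_cases hf1 : f = em
        · rw [hf1, dm]
          nlinarith [mul_pos (ha i em) hk]
        · by_cases hf2 : f = ep
          · rw [hf2, dp]
            nlinarith [hQ i em ep hkem, mul_pos (ha i em) hk, mul_pos (ha i ep) hk]
          · rw [d0 f hf1 hf2]
            nlinarith [hQ i em f hkem, mul_pos (ha i em) hk]
      · by_cases he2 : e = ep
        · rw [he2, dp]
          by_cases hf1 : f = em
          · rw [hf1, dm]
            nlinarith [klt, mul_pos (ha i ep) hk]
          · by_cases hf2 : f = ep
            · rw [hf2, dp]
              nlinarith [mul_pos (ha i ep) hk]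
            · rw [d0 f hf1 hf2]
              nlinarith [kmin f hf1, mul_pos (ha i ep) hk]
        · rw [d0 e he1 he2] at hke' ⊢
          have hke : k ≤ z i e := by linarith
          by_cases hf1 : f = em
          · rw [hf1, dm]
            nlinarith [kmax e]
          · by_cases hf2 : f = ep
            · rw [hf2, dp]
              nlinarith [hQ i e ep hke, mul_pos (ha i ep) hk]
            · rw [d0 f hf1 hf2]
              nlinarith [hQ i e f hke]
    · rw [hvo j e hj] at hke'
      rw [hvo j e hj, hvo j f hj]
      exact hQ j e f hke'

lemma addInv_bound {N E : Type*} [Fintype N] [Fintype E] [DecidableEq N] [DecidableEq E]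
    (a b : N → E → ℝ) (ha : ∀ i e, 0 < a i e)
    (k : ℝ) (hk : 0 < k) (hm : 2 ≤ Fintype.card E) (i0 : N) (xk z : N → E → ℝ)
    (hxnn : ∀ i e, 0 ≤ xk i e)
    (hkeq : ∀ i e f, 0 < xk i e → mum a b k xk i e ≤ mup a b k xk i f)
    (hinv : AddInv a b k i0 xk z) :
    ∀ i e, |z i e - xk i e| < 2 * Fintype.card E * k := by
  obtain ⟨hN, hT, -, hQ⟩ := hinv
  intro i e0
  have hkeq' : ∀ e f, 0 < xk i e →
      a i e * ((∑ j, xk j e) + xk i e - k) + b i e ≤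
        a i f * ((∑ j, xk j f) + xk i f + k) + b i f := by
    intro e f h
    have h' := hkeq i e f h
    rw [mum, mup] at h'
    exact le_of_mul_le_mul_left h' hk
  have pair : ∀ e f, z i e + k ≤ xk i e → xk i f + k ≤ z i f →
      a i f * ((z i f - xk i f) - 2*k) ≤ a i e * ((z i e - xk i e) + 2*k) := by
    intro e f h1 h2
    have hxe : 0 < xk i e := by have := hN i e; linarith
    have hzf : k ≤ z i f := by have := hxnn i f; linarith
    have hA := hkeq' e f hxe
    have hB := hQ i f e hzf
    nlinarith [hA, hB]
  have hS1 : 0 ≤ ∑ e, (z i e - xk i e) := by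
    rw [Finset.sum_sub_distrib, hT i]; split_ifs <;> linarith
  have hS2 : (∑ e, (z i e - xk i e)) ≤ k := by
    rw [Finset.sum_sub_distrib, hT i]; split_ifs <;> linarith
  have hm2 : (2:ℝ) ≤ (Fintype.card E : ℝ) := by exact_mod_cast hm
  have hcard : ((Finset.univ.erase e0).card : ℝ) = (Fintype.card E : ℝ) - 1 := by
    rw [Finset.card_erase_of_mem (Finset.mem_univ e0), Finset.card_univ]
    have h1 : (1:ℕ) ≤ Fintype.card E := by omega
    push_cast [h1]
    ring
  have hsplit : (z i e0 - xk i e0) + ∑ e ∈ Finset.univ.erase e0, (z i e - xk i e)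
      = ∑ e, (z i e - xk i e) := by
    rw [add_comm]
    exact Finset.sum_erase_add _ _ (Finset.mem_univ e0)
  have hkey : 2*k < 2 * (Fintype.card E : ℝ) * k := by
    nlinarith [mul_pos (show (0:ℝ) < (Fintype.card E : ℝ) - 1 by linarith) hk]
  rw [abs_lt]
  constructor
  · -- lower bound
    rcases le_or_gt (-(2*k)) (z i e0 - xk i e0) with h | h
    · linarith
    · have hall : ∀ e, z i e - xk i e < 2*k := by
        intro e
        by_contra hq
        push_neg at hq
        have h1 : z i e0 + k ≤ xk i e0 := by linarith
        have h2 : xk i e + k ≤ z i e := by linarith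
        have hp := pair e0 e h1 h2
        have l1 : 0 ≤ a i e * ((z i e - xk i e) - 2*k) :=
          mul_nonneg (ha i e).le (by linarith)
        have l2 : a i e0 * ((z i e0 - xk i e0) + 2*k) < 0 :=
          mul_neg_of_pos_of_neg (ha i e0) (by linarith)
        linarith
      have hub : ∑ e ∈ Finset.univ.erase e0, (z i e - xk i e)
          ≤ ((Finset.univ.erase e0).card : ℝ) * (2*k) := by
        calc ∑ e ∈ Finset.univ.erase e0, (z i e - xk i e)
            ≤ ∑ _e ∈ Finset.univ.erase e0, (2*k) :=
              Finset.sum_le_sum fun e _ => (hall e).le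
          _ = _ := by rw [Finset.sum_const, nsmul_eq_mul]
      rw [hcard] at hub
      nlinarith
  · -- upper bound
    rcases le_or_gt (z i e0 - xk i e0) (2*k) with h | h
    · linarith
    · have hall : ∀ e, -(2*k) < z i e - xk i e := by
        intro e
        by_contra hq
        push_neg at hq
        have h1 : z i e + k ≤ xk i e := by linarith
        have h2 : xk i e0 + k ≤ z i e0 := by linarith
        have hp := pair e e0 h1 h2
        have l1 : 0 < a i e0 * ((z i e0 - xk i e0) - 2*k) :=
          mul_pos (ha i e0) (by linarith)
        have l2 : a i e * ((z i e - xk i e) + 2*k) ≤ 0 :=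
          mul_nonpos_of_nonneg_of_nonpos (ha i e).le (by linarith)
        linarith
      have hlb : ((Finset.univ.erase e0).card : ℝ) * (-(2*k))
          ≤ ∑ e ∈ Finset.univ.erase e0, (z i e - xk i e) := by
        calc ((Finset.univ.erase e0).card : ℝ) * (-(2*k))
            = ∑ _e ∈ Finset.univ.erase e0, (-(2*k)) := by
              rw [Finset.sum_const, nsmul_eq_mul]
          _ ≤ _ := Finset.sum_le_sum fun e _ => (hall e).le
      rw [hcard] at hlb
      nlinarith

/-- in the `Add` subroutine, starting from a `k`-integral equilibrium
`xk` and inserting one extra packet for player `i0` on a resource minimizing her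
marginal increase, any profile `xq` reached by a sequence of restricted best responses
satisfies `|xq i e − xk i e| < 2·m·k` for all players `i` and resources `e`. -/
theorem stmt15 {N E : Type*} [Fintype N] [Fintype E] [DecidableEq N] [DecidableEq E]
    (a b : N → E → ℝ) (ha : ∀ i e, 0 < a i e) (hb : ∀ i e, 0 ≤ b i e)
    (k : ℝ) (hk : 0 < k) (hm : 2 ≤ Fintype.card E)
    (xk : N → E → ℝ) (hint : ∀ i e, ∃ q : ℕ, xk i e = q * k)
    (hkeq : ∀ i e f, 0 < xk i e → mum a b k xk i e ≤ mup a b k xk i f)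
    (i0 : N) (f0 : E) (hf0 : ∀ f, mup a b k xk i0 f0 ≤ mup a b k xk i0 f)
    (x0 : N → E → ℝ)
    (hx0 : x0 = fun j f => if j = i0 ∧ f = f0 then xk j f + k else xk j f)
    (xq : N → E → ℝ)
    (hchain : Relation.ReflTransGen (RBRStep a b k) x0 xq) :
    ∀ i e, |xq i e - xk i e| < 2 * Fintype.card E * k := by
  have hxnn : ∀ i e, 0 ≤ xk i e := by
    intro i e
    obtain ⟨q, hq⟩ := hint i e
    rw [hq]
    exact mul_nonneg (Nat.cast_nonneg q) hk.le
  have hbase := addInv_base a b ha k hk xk hxnn hkeq i0 f0 hf0 x0 hx0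
  have hq : AddInv a b k i0 xk xq := by
    induction hchain with
    | refl => exact hbase
    | tail _ hstep ih => exact addInv_step a b ha k hk i0 xk _ _ ih hstep
  exact addInv_bound a b ha k hk hm i0 xk xq hxnn hkeq hq
end
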